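/- Let X₁ = (−v + λs(1−s²−v²), s + λv(1−s²−v²), −aw) and X₂ = (s + εv, −εs + v, 0) × X₁, and η = (X₁ × X₂)/|X₁ × X₂| (defined where X₁ × X₂ ≠ 0). Then along the unit circle γ(t) = (cos t, sin t, 0), η(γ(t)) = (cos t, sin t, 0); the circle γ is an η-principal cycle, and the η-principal curvatures along γ are k₁ = −1 and k₂ = aε. -/

import Mathlib

open Matrix

noncomputable section

/-- The Jacobian matrix of a vector field on `ℝ³` at a point. -/
def jac (X : (Fin 3 → ℝ) → (Fin 3 → ℝ)) (p : Fin 3 → ℝ) : Matrix (Fin 3) (Fin 3) ℝ :=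
  Matrix.of fun i j => fderiv ℝ (fun q => X q i) p (Pi.single j 1)

/-- The curl of a vector field on `ℝ³` at a point. -/
def curl (X : (Fin 3 → ℝ) → (Fin 3 → ℝ)) (p : Fin 3 → ℝ) : Fin 3 → ℝ :=
  ![jac X p 2 1 - jac X p 1 2, jac X p 0 2 - jac X p 2 0, jac X p 1 0 - jac X p 0 1]

/-- The normal curvature of the plane field orthogonal to `X` in the direction `dr`. -/
def knormal (X : (Fin 3 → ℝ) → (Fin 3 → ℝ)) (p dr : Fin 3 → ℝ) : ℝ :=
  -(fderiv ℝ X p dr ⬝ᵥ dr) / (dr ⬝ᵥ dr)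

/-- `dr` is an η-principal direction of the plane field orthogonal to `X` at `p`:
`2(DX·dr, dr, X) + ⟨curl X, X⟩⟨dr,dr⟩ = 0` and `⟨X, dr⟩ = 0`. -/
def principalEq (X : (Fin 3 → ℝ) → (Fin 3 → ℝ)) (p dr : Fin 3 → ℝ) : Prop :=
  2 * (fderiv ℝ X p dr ⬝ᵥ (dr ⨯₃ X p)) + (curl X p ⬝ᵥ X p) * (dr ⬝ᵥ dr) = 0 ∧
    X p ⬝ᵥ dr = 0

/-- The vector field `X₁` of the example. -/
def exX₁ (lam a : ℝ) (p : Fin 3 → ℝ) : Fin 3 → ℝ :=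
  ![-p 1 + lam * p 0 * (1 - p 0 ^ 2 - p 1 ^ 2),
    p 0 + lam * p 1 * (1 - p 0 ^ 2 - p 1 ^ 2),
    -a * p 2]

/-- The vector field `X₂ = (s + εv, −εs + v, 0) × X₁` of the example. -/
def exX₂ (lam a ε : ℝ) (p : Fin 3 → ℝ) : Fin 3 → ℝ :=
  ![p 0 + ε * p 1, -ε * p 0 + p 1, 0] ⨯₃ exX₁ lam a p

/-- The unit vector field `η = (X₁ × X₂)/|X₁ × X₂|` of the example. -/
def exEta (lam a ε : ℝ) (p : Fin 3 → ℝ) : Fin 3 → ℝ :=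
  (Real.sqrt ((exX₁ lam a p ⨯₃ exX₂ lam a ε p) ⬝ᵥ (exX₁ lam a p ⨯₃ exX₂ lam a ε p)))⁻¹ •
    (exX₁ lam a p ⨯₃ exX₂ lam a ε p)

set_option maxHeartbeats 4000000 in
lemma key (lam a ε s v : ℝ) (h : s ^ 2 + v ^ 2 = 1) :
    exEta lam a ε ![s, v, 0] = ![s, v, 0] ∧
    principalEq (exEta lam a ε) ![s, v, 0] ![-v, s, 0] ∧
    knormal (exEta lam a ε) ![s, v, 0] ![-v, s, 0] = -1 ∧
    principalEq (exEta lam a ε) ![s, v, 0] ![0, 0, 1] ∧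
    knormal (exEta lam a ε) ![s, v, 0] ![0, 0, 1] = a * ε := by
  have hp0 : HasFDerivAt (fun q : Fin 3 → ℝ => q 0)
      ((ContinuousLinearMap.proj (0 : Fin 3) : (Fin 3 → ℝ) →L[ℝ] ℝ)) ![s, v, 0] :=
    (ContinuousLinearMap.proj (0 : Fin 3) : (Fin 3 → ℝ) →L[ℝ] ℝ).hasFDerivAt
  have hp1 : HasFDerivAt (fun q : Fin 3 → ℝ => q 1)
      ((ContinuousLinearMap.proj (1 : Fin 3) : (Fin 3 → ℝ) →L[ℝ] ℝ)) ![s, v, 0] :=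
    (ContinuousLinearMap.proj (1 : Fin 3) : (Fin 3 → ℝ) →L[ℝ] ℝ).hasFDerivAt
  have hp2 : HasFDerivAt (fun q : Fin 3 → ℝ => q 2)
      ((ContinuousLinearMap.proj (2 : Fin 3) : (Fin 3 → ℝ) →L[ℝ] ℝ)) ![s, v, 0] :=
    (ContinuousLinearMap.proj (2 : Fin 3) : (Fin 3 → ℝ) →L[ℝ] ℝ).hasFDerivAt
  have hE0 : HasFDerivAt (fun q : Fin 3 → ℝ => (((q 0 + (lam * (q 1 * ((1 - (q 0 * q 0)) - (q 1 * q 1))))) * (((q 0 * q 0) + (q 1 * q 1)) * (1 + (ε * (lam * ((1 - (q 0 * q 0)) - (q 1 * q 1))))))) + ((a * a) * ((q 2 * q 2) * (q 0 + (ε * q 1)))))) _ ![s, v, 0] :=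
    (((hp0.add ((hasFDerivAt_const (lam : ℝ) ![s, v, 0]).mul (hp1.mul (((hasFDerivAt_const (1 : ℝ) ![s, v, 0]).sub (hp0.mul hp0)).sub (hp1.mul hp1))))).mul (((hp0.mul hp0).add (hp1.mul hp1)).mul ((hasFDerivAt_const (1 : ℝ) ![s, v, 0]).add ((hasFDerivAt_const (ε : ℝ) ![s, v, 0]).mul ((hasFDerivAt_const (lam : ℝ) ![s, v, 0]).mul (((hasFDerivAt_const (1 : ℝ) ![s, v, 0]).sub (hp0.mul hp0)).sub (hp1.mul hp1))))))).add (((hasFDerivAt_const (a : ℝ) ![s, v, 0]).mul (hasFDerivAt_const (a : ℝ) ![s, v, 0])).mul ((hp2.mul hp2).mul (hp0.add ((hasFDerivAt_const (ε : ℝ) ![s, v, 0]).mul hp1)))))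
  have hE1 : HasFDerivAt (fun q : Fin 3 → ℝ => (((q 1 - (lam * (q 0 * ((1 - (q 0 * q 0)) - (q 1 * q 1))))) * (((q 0 * q 0) + (q 1 * q 1)) * (1 + (ε * (lam * ((1 - (q 0 * q 0)) - (q 1 * q 1))))))) + ((a * a) * ((q 2 * q 2) * (q 1 - (ε * q 0)))))) _ ![s, v, 0] :=
    (((hp1.sub ((hasFDerivAt_const (lam : ℝ) ![s, v, 0]).mul (hp0.mul (((hasFDerivAt_const (1 : ℝ) ![s, v, 0]).sub (hp0.mul hp0)).sub (hp1.mul hp1))))).mul (((hp0.mul hp0).add (hp1.mul hp1)).mul ((hasFDerivAt_const (1 : ℝ) ![s, v, 0]).add ((hasFDerivAt_const (ε : ℝ) ![s, v, 0]).mul ((hasFDerivAt_const (lam : ℝ) ![s, v, 0]).mul (((hasFDerivAt_const (1 : ℝ) ![s, v, 0]).sub (hp0.mul hp0)).sub (hp1.mul hp1))))))).add (((hasFDerivAt_const (a : ℝ) ![s, v, 0]).mul (hasFDerivAt_const (a : ℝ) ![s, v, 0])).mul ((hp2.mul hp2).mul (hp1.sub ((hasFDerivAt_const (ε : ℝ)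 ![s, v, 0]).mul hp0)))))
  have hE2 : HasFDerivAt (fun q : Fin 3 → ℝ => (a * (q 2 * (((q 0 * q 0) + (q 1 * q 1)) * ((lam * ((1 - (q 0 * q 0)) - (q 1 * q 1))) - ε))))) _ ![s, v, 0] :=
    ((hasFDerivAt_const (a : ℝ) ![s, v, 0]).mul (hp2.mul (((hp0.mul hp0).add (hp1.mul hp1)).mul (((hasFDerivAt_const (lam : ℝ) ![s, v, 0]).mul (((hasFDerivAt_const (1 : ℝ) ![s, v, 0]).sub (hp0.mul hp0)).sub (hp1.mul hp1))).sub (hasFDerivAt_const (ε : ℝ) ![s, v, 0])))))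
  have hG0 : HasFDerivAt (fun q : Fin 3 → ℝ => (exX₁ lam a q ⨯₃ exX₂ lam a ε q) 0) _ ![s, v, 0] :=
    hE0.congr_of_eventuallyEq (Filter.Eventually.of_forall fun q => by
      simp [exX₁, exX₂, cross_apply]; ring)
  have hG1 : HasFDerivAt (fun q : Fin 3 → ℝ => (exX₁ lam a q ⨯₃ exX₂ lam a ε q) 1) _ ![s, v, 0] :=
    hE1.congr_of_eventuallyEq (Filter.Eventually.of_forall fun q => by
      simp [exX₁, exX₂, cross_apply]; ring)
  have hG2 : HasFDerivAt (fun q : Fin 3 → ℝ => (exX₁ lam a q ⨯₃ exX₂ lam a ε q) 2) _ ![s, v, 0] :=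
    hE2.congr_of_eventuallyEq (Filter.Eventually.of_forall fun q => by
      simp [exX₁, exX₂, cross_apply]; ring)
  have hGp : (exX₁ lam a ![s, v, 0] ⨯₃ exX₂ lam a ε ![s, v, 0]) = ![s, v, 0] := by
    funext i; fin_cases i
    · show (exX₁ lam a ![s, v, 0] ⨯₃ exX₂ lam a ε ![s, v, 0]) 0 = s
      simp [exX₁, exX₂, cross_apply]
      linear_combination (s*s*s*s*v*lam*lam*ε + (-1 : ℝ)*s*s*s*lam*ε + 2*s*s*v*v*v*lam*lam*ε + (-1 : ℝ)*s*s*v*lam*lam*ε + (-1 : ℝ)*s*s*v*lam + (-1 : ℝ)*s*v*v*lam*ε + s + v*v*v*v*v*lam*lam*ε + (-1 : ℝ)*v*v*v*lam*lam*ε + (-1 : ℝ)*v*v*v*lam) * h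
    · show (exX₁ lam a ![s, v, 0] ⨯₃ exX₂ lam a ε ![s, v, 0]) 1 = v
      simp [exX₁, exX₂, cross_apply]
      linear_combination ((-1 : ℝ)*s*s*s*s*s*lam*lam*ε + (-2 : ℝ)*s*s*s*v*v*lam*lam*ε + s*s*s*lam*lam*ε + s*s*s*lam + (-1 : ℝ)*s*s*v*lam*ε + (-1 : ℝ)*s*v*v*v*v*lam*lam*ε + s*v*v*lam*lam*ε + s*v*v*lam + (-1 : ℝ)*v*v*v*lam*ε + v) * h
    · show (exX₁ lam a ![s, v, 0] ⨯₃ exX₂ lam a ε ![s, v, 0]) 2 = 0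
      simp [exX₁, exX₂, cross_apply]
  have hQv : (exX₁ lam a ![s, v, 0] ⨯₃ exX₂ lam a ε ![s, v, 0]) ⬝ᵥ (exX₁ lam a ![s, v, 0] ⨯₃ exX₂ lam a ε ![s, v, 0]) = 1 := by
    rw [hGp]; simp [dotProduct, Fin.sum_univ_three]; linear_combination h
  have hQraw : HasFDerivAt (fun q : Fin 3 → ℝ => (exX₁ lam a q ⨯₃ exX₂ lam a ε q) ⬝ᵥ (exX₁ lam a q ⨯₃ exX₂ lam a ε q)) _ ![s, v, 0] :=
    (((hG0.mul hG0).add (hG1.mul hG1)).add (hG2.mul hG2)).congr_of_eventuallyEq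
      (Filter.Eventually.of_forall fun q => by simp [dotProduct, Fin.sum_univ_three])
  have hS : HasFDerivAt (fun q : Fin 3 → ℝ => Real.sqrt ((exX₁ lam a q ⨯₃ exX₂ lam a ε q) ⬝ᵥ (exX₁ lam a q ⨯₃ exX₂ lam a ε q))) _ ![s, v, 0] :=
    hQraw.sqrt (by rw [hQv]; norm_num)
  have hSval : Real.sqrt ((exX₁ lam a ![s, v, 0] ⨯₃ exX₂ lam a ε ![s, v, 0]) ⬝ᵥ (exX₁ lam a ![s, v, 0] ⨯₃ exX₂ lam a ε ![s, v, 0])) = 1 := by rw [hQv]; exact Real.sqrt_one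
  have hinv : HasFDerivAt (fun q : Fin 3 → ℝ => (Real.sqrt ((exX₁ lam a q ⨯₃ exX₂ lam a ε q) ⬝ᵥ (exX₁ lam a q ⨯₃ exX₂ lam a ε q)))⁻¹) _ ![s, v, 0] :=
    (hasDerivAt_inv (by rw [hSval]; norm_num)).comp_hasFDerivAt ![s, v, 0] hS
  have hc0 : HasFDerivAt (fun q : Fin 3 → ℝ => exEta lam a ε q 0) _ ![s, v, 0] :=
    (hinv.smul hG0).congr_of_eventuallyEq (Filter.Eventually.of_forall fun q => rfl)
  have hc1 : HasFDerivAt (fun q : Fin 3 → ℝ => exEta lam a ε q 1) _ ![s, v, 0] :=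
    (hinv.smul hG1).congr_of_eventuallyEq (Filter.Eventually.of_forall fun q => rfl)
  have hc2 : HasFDerivAt (fun q : Fin 3 → ℝ => exEta lam a ε q 2) _ ![s, v, 0] :=
    (hinv.smul hG2).congr_of_eventuallyEq (Filter.Eventually.of_forall fun q => rfl)
  rw [hSval] at hc0 hc1 hc2
  rw [hGp] at hc0 hc1 hc2
  have hval : exEta lam a ε ![s, v, 0] = ![s, v, 0] := by
    show (Real.sqrt ((exX₁ lam a ![s, v, 0] ⨯₃ exX₂ lam a ε ![s, v, 0]) ⬝ᵥ (exX₁ lam a ![s, v, 0] ⨯₃ exX₂ lam a ε ![s, v, 0])))⁻¹ • (exX₁ lam a ![s, v, 0] ⨯₃ exX₂ lam a ε ![s, v, 0]) = ![s, v, 0]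
    rw [hSval, hGp, inv_one, one_smul]
  have hd : DifferentiableAt ℝ (exEta lam a ε) ![s, v, 0] := by
    rw [differentiableAt_pi]
    intro i; fin_cases i
    exacts [hc0.differentiableAt, hc1.differentiableAt, hc2.differentiableAt]
  have hcomp : ∀ (dr : Fin 3 → ℝ) (i : Fin 3),
      fderiv ℝ (exEta lam a ε) ![s, v, 0] dr i = fderiv ℝ (fun q => exEta lam a ε q i) ![s, v, 0] dr := by
    intro dr i
    rw [(hasFDerivAt_pi'.1 hd.hasFDerivAt i).fderiv]
    simp
  refine ⟨hval, ⟨?_, ?_⟩, ?_, ⟨?_, ?_⟩, ?_⟩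
  -- principalEq tangent, eq 1
  · simp only [curl, jac, Matrix.of_apply, hval]
    rw [hc2.fderiv, hc1.fderiv, hc0.fderiv]
    simp only [dotProduct, Fin.sum_univ_three]
    rw [hcomp ![-v, s, 0] 0, hcomp ![-v, s, 0] 1, hcomp ![-v, s, 0] 2]
    rw [hc0.fderiv, hc1.fderiv, hc2.fderiv]
    simp [cross_apply]
  · rw [hval]; simp [dotProduct, Fin.sum_univ_three]; ring
  -- knormal tangent
  · show -(fderiv ℝ (exEta lam a ε) ![s, v, 0] ![-v, s, 0] ⬝ᵥ ![-v, s, 0]) / (![-v, s, 0] ⬝ᵥ ![-v, s, 0]) = -1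
    have hdd : (![-v, s, 0] : Fin 3 → ℝ) ⬝ᵥ ![-v, s, 0] = 1 := by simp [dotProduct, Fin.sum_univ_three]; linear_combination h
    rw [hdd, div_one]
    simp only [dotProduct, Fin.sum_univ_three]
    rw [hcomp ![-v, s, 0] 0, hcomp ![-v, s, 0] 1, hcomp ![-v, s, 0] 2]
    rw [hc0.fderiv, hc1.fderiv, hc2.fderiv]
    simp
    linear_combination (s*s*s*s*lam*ε + 2*s*s*v*v*lam*ε + (-1 : ℝ)*s*s + v*v*v*v*lam*ε + (-1 : ℝ)*v*v + (-1 : ℝ)) * h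
  -- principalEq e3, eq 1
  · simp only [curl, jac, Matrix.of_apply, hval]
    rw [hc2.fderiv, hc1.fderiv, hc0.fderiv]
    simp only [dotProduct, Fin.sum_univ_three]
    rw [hcomp ![0, 0, 1] 0, hcomp ![0, 0, 1] 1, hcomp ![0, 0, 1] 2]
    rw [hc0.fderiv, hc1.fderiv, hc2.fderiv]
    simp [cross_apply]
  · rw [hval]; simp [dotProduct, Fin.sum_univ_three]
  -- knormal e3
  · show -(fderiv ℝ (exEta lam a ε) ![s, v, 0] ![0, 0, 1] ⬝ᵥ ![0, 0, 1]) / (![0, 0, 1] ⬝ᵥ ![0, 0, 1]) = a * ε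
    have hdd : (![0, 0, 1] : Fin 3 → ℝ) ⬝ᵥ ![0, 0, 1] = 1 := by simp [dotProduct, Fin.sum_univ_three]
    rw [hdd, div_one]
    simp only [dotProduct, Fin.sum_univ_three]
    rw [hcomp ![0, 0, 1] 0, hcomp ![0, 0, 1] 1, hcomp ![0, 0, 1] 2]
    rw [hc0.fderiv, hc1.fderiv, hc2.fderiv]
    simp
    linear_combination (s*s*lam*a + v*v*lam*a + a*ε) * h

set_option maxHeartbeats 1000000 in
/-- Along the unit circle `γ(t) = (cos t, sin t, 0)` one has `η(γ(t)) = γ(t)`; the circle is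
a closed η-principal line (an η-principal cycle) of the foliation tangent to `γ'`, and the
η-principal curvatures along `γ` are `k₁ = −1` (in the direction `γ'`) and `k₂ = aε`
(in the orthogonal principal direction `(0,0,1)`). -/
theorem stmt_16 (lam a ε : ℝ) (γ : ℝ → Fin 3 → ℝ)
    (hγ : ∀ t, γ t = ![Real.cos t, Real.sin t, 0]) :
    (∀ t, exEta lam a ε (γ t) = γ t) ∧
    (∀ t, γ (t + 2 * Real.pi) = γ t) ∧
    (∀ t, principalEq (exEta lam a ε) (γ t) ![-Real.sin t, Real.cos t, 0]) ∧
    (∀ t, knormal (exEta lam a ε) (γ t) ![-Real.sin t, Real.cos t, 0] = -1) ∧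
    (∀ t, principalEq (exEta lam a ε) (γ t) ![0, 0, 1]) ∧
    (∀ t, knormal (exEta lam a ε) (γ t) ![0, 0, 1] = a * ε) := by
  have hper : ∀ t, γ (t + 2 * Real.pi) = γ t := by
    intro t; rw [hγ, hγ, Real.cos_add_two_pi, Real.sin_add_two_pi]
  refine ⟨fun t => ?_, hper, fun t => ?_, fun t => ?_, fun t => ?_, fun t => ?_⟩ <;>
    rw [hγ t] <;>
    [exact (key lam a ε _ _ (Real.cos_sq_add_sin_sq t)).1;
     exact (key lam a ε _ _ (Real.cos_sq_add_sin_sq t)).2.1;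
     exact (key lam a ε _ _ (Real.cos_sq_add_sin_sq t)).2.2.1;
     exact (key lam a ε _ _ (Real.cos_sq_add_sin_sq t)).2.2.2.1;
     exact (key lam a ε _ _ (Real.cos_sq_add_sin_sq t)).2.2.2.2]

end
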